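/- Let B = {b_1,...,b_{N+1}} be vectors in Z^2 with sum zero, and let w be a vector such that ⟨b_i, w⟩ ≠ 0 for all i with b_i ≠ 0, and let w⊥ be a nonzero vector orthogonal to w. Suppose the rays R·w⊥, R·b_1, ..., R·b_{N+1} occur in weak clockwise cyclic order with R·w⊥ distinct from the rest. Then the sum of det(b_i, b_j) over pairs i < j with ⟨b_i, w⟩ > 0 > ⟨b_j, w⟩ equals the sum of |det(b_i, b_j)| over pairs i < j with w⊥ in the cone generated by b_i and b_j. -/

import Mathlib

/-!
Write `b i = t i • e (θ i)`, where `e θ` is `w⊥` rotated clockwise by `θ`. For `i < j` we have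
`0 < θ i ≤ θ j < π`, so when `det(b i, b j) ≠ 0` the cone of `b i, b j` contains `w⊥` exactly
when `t i > 0 > t j`, and then `det(b i, b j) > 0`: the right-hand side is the sum of
`det(b i, b j)` over `i < j` with `t i > 0 > t j`. Since `⟨e θ, w⟩ = sin θ · det(w, w⊥)`, the
left-hand side is this same sum if `det(w, w⊥) > 0`, and the sum with the roles of `t > 0` and
`t < 0` exchanged if `det(w, w⊥) < 0`. These two sums differ by
`det(∑_{t > 0} b, ∑_{t < 0} b) = -det(∑_{t < 0} b, ∑_{t < 0} b) = 0`, because `∑ b = 0`.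
-/

open scoped Classical

noncomputable section

def toR (x : ℤ × ℤ) : ℝ × ℝ := ((x.1 : ℝ), (x.2 : ℝ))

def det2 (x y : ℝ × ℝ) : ℝ := x.1 * y.2 - x.2 * y.1

def dot (x y : ℝ × ℝ) : ℝ := x.1 * y.1 + x.2 * y.2

def inCone (x y v : ℝ × ℝ) : Prop := ∃ s t : ℝ, 0 ≤ s ∧ 0 ≤ t ∧ v = s • x + t • y

/-- Clockwise rotation of the plane by angle `θ`. -/
def rotCW (θ : ℝ) (u : ℝ × ℝ) : ℝ × ℝ :=
  (Real.cos θ * u.1 + Real.sin θ * u.2, -Real.sin θ * u.1 + Real.cos θ * u.2)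

lemma toR_sum {ι : Type*} (s : Finset ι) (f : ι → ℤ × ℤ) :
    toR (∑ i ∈ s, f i) = ∑ i ∈ s, toR (f i) := by
  ext <;> simp [toR, Prod.fst_sum, Prod.snd_sum]

lemma det2_self (x : ℝ × ℝ) : det2 x x = 0 := by
  simp [det2, mul_comm]

lemma det2_swap (x y : ℝ × ℝ) : det2 y x = -det2 x y := by
  simp only [det2]; ring

lemma det2_smul_left (a : ℝ) (x y : ℝ × ℝ) : det2 (a • x) y = a * det2 x y := by
  simp only [det2, Prod.smul_fst, Prod.smul_snd, smul_eq_mul]; ring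

lemma det2_smul_right (a : ℝ) (x y : ℝ × ℝ) : det2 x (a • y) = a * det2 x y := by
  simp only [det2, Prod.smul_fst, Prod.smul_snd, smul_eq_mul]; ring

lemma det2_sum_left {ι : Type*} (s : Finset ι) (f : ι → ℝ × ℝ) (y : ℝ × ℝ) :
    det2 (∑ i ∈ s, f i) y = ∑ i ∈ s, det2 (f i) y := by
  simp [det2, Prod.fst_sum, Prod.snd_sum, Finset.sum_mul, Finset.sum_sub_distrib]

lemma det2_sum_right {ι : Type*} (s : Finset ι) (f : ι → ℝ × ℝ) (x : ℝ × ℝ) :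
    det2 x (∑ i ∈ s, f i) = ∑ i ∈ s, det2 x (f i) := by
  simp [det2, Prod.fst_sum, Prod.snd_sum, Finset.mul_sum, Finset.sum_sub_distrib]

lemma det2_add_left (x x' y : ℝ × ℝ) : det2 (x + x') y = det2 x y + det2 x' y := by
  simp only [det2, Prod.fst_add, Prod.snd_add]; ring

lemma det2_add_right (x y y' : ℝ × ℝ) : det2 x (y + y') = det2 x y + det2 x y' := by
  simp only [det2, Prod.fst_add, Prod.snd_add]; ring

lemma dot_smul_left (a : ℝ) (x y : ℝ × ℝ) : dot (a • x) y = a * dot x y := by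
  simp only [dot, Prod.smul_fst, Prod.smul_snd, smul_eq_mul]; ring

lemma fst_sq_add_snd_sq_pos {u : ℝ × ℝ} (hu : u ≠ 0) : 0 < u.1 ^ 2 + u.2 ^ 2 := by
  have : u.1 ≠ 0 ∨ u.2 ≠ 0 := by
    by_contra! h
    exact hu (Prod.ext h.1 h.2)
  rcases this with h | h <;> positivity

lemma det2_ne_zero_of_dot_eq_zero {u w : ℝ × ℝ} (hu : u ≠ 0) (hw : w ≠ 0) (h : dot u w = 0) :
    det2 w u ≠ 0 := by
  intro h'
  have lagrange : dot u w ^ 2 + det2 w u ^ 2 = (u.1 ^ 2 + u.2 ^ 2) * (w.1 ^ 2 + w.2 ^ 2) := by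
    simp only [dot, det2]; ring
  rw [h, h'] at lagrange
  have := mul_pos (fst_sq_add_snd_sq_pos hu) (fst_sq_add_snd_sq_pos hw)
  linarith

lemma rotCW_zero (u : ℝ × ℝ) : rotCW 0 u = u := by
  simp [rotCW]

lemma det2_rotCW_rotCW (α β : ℝ) (u : ℝ × ℝ) :
    det2 (rotCW α u) (rotCW β u) = Real.sin (α - β) * (u.1 ^ 2 + u.2 ^ 2) := by
  simp only [det2, rotCW, Real.sin_sub]; ring

lemma dot_rotCW (α : ℝ) (u w : ℝ × ℝ) :
    dot (rotCW α u) w = Real.cos α * dot u w + Real.sin α * det2 w u := by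
  simp only [dot, det2, rotCW]; ring

lemma inCone_iff_det2_mul_nonneg {x y v : ℝ × ℝ} (h : det2 x y ≠ 0) :
    inCone x y v ↔ 0 ≤ det2 v y * det2 x y ∧ 0 ≤ det2 x v * det2 x y := by
  constructor
  · rintro ⟨s, t, hs, ht, rfl⟩
    simp only [det2_add_left, det2_add_right, det2_smul_left, det2_smul_right, det2_self,
      mul_zero, add_zero, zero_add, mul_assoc]
    exact ⟨mul_nonneg hs (mul_self_nonneg _), mul_nonneg ht (mul_self_nonneg _)⟩
  · rintro ⟨h1, h2⟩
    have cramer : det2 x y • v = det2 v y • x + det2 x v • y := by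
      ext <;> simp only [det2, Prod.fst_add, Prod.snd_add, Prod.smul_fst, Prod.smul_snd,
        smul_eq_mul] <;> ring
    refine ⟨det2 v y * det2 x y / det2 x y ^ 2, det2 x v * det2 x y / det2 x y ^ 2,
      by positivity, by positivity, ?_⟩
    have hdiv (c : ℝ) : c * det2 x y / det2 x y ^ 2 = (det2 x y)⁻¹ * c := by
      field_simp
    rw [hdiv, hdiv, mul_smul, mul_smul, ← smul_add, ← cramer, smul_smul, inv_mul_cancel₀ h,
      one_smul]

lemma inCone_smul_smul_iff {x y v : ℝ × ℝ} (hxv : 0 < det2 x v) (hyv : 0 < det2 y v)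
    (hxy : det2 x y < 0) {a b : ℝ} (ha : a ≠ 0) (hb : b ≠ 0) :
    inCone (a • x) (b • y) v ↔ 0 < a ∧ b < 0 := by
  have hD : det2 (a • x) (b • y) ≠ 0 := by
    simp only [det2_smul_left, det2_smul_right]
    exact mul_ne_zero hb (mul_ne_zero ha hxy.ne)
  rw [inCone_iff_det2_mul_nonneg hD]
  have e1 : det2 v (b • y) * det2 (a • x) (b • y) = a * (b ^ 2 * (det2 y v * -det2 x y)) := by
    simp only [det2_smul_left, det2_smul_right, det2_swap y v]; ring
  have e2 : det2 (a • x) v * det2 (a • x) (b • y) = -b * (a ^ 2 * (det2 x v * -det2 x y)) := by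
    simp only [det2_smul_left, det2_smul_right]; ring
  have hxy' : 0 < -det2 x y := neg_pos.2 hxy
  rw [e1, e2, mul_nonneg_iff_of_pos_right (by positivity),
    mul_nonneg_iff_of_pos_right (by positivity), neg_nonneg]
  exact and_congr ha.symm.le_iff_lt hb.le_iff_lt

lemma ite_inCone_abs_det2_rotCW {u : ℝ × ℝ} (hu : u ≠ 0) {α β s t : ℝ}
    (hα : 0 < α) (hαβ : α ≤ β) (hβ : β < Real.pi) :
    (if inCone (s • rotCW α u) (t • rotCW β u) u then |det2 (s • rotCW α u) (t • rotCW β u)|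
      else 0) = if 0 < s ∧ t < 0 then det2 (s • rotCW α u) (t • rotCW β u) else 0 := by
  have hr := fst_sq_add_snd_sq_pos hu
  have hdet : det2 (s • rotCW α u) (t • rotCW β u) =
      s * t * (Real.sin (α - β) * (u.1 ^ 2 + u.2 ^ 2)) := by
    rw [det2_smul_left, det2_smul_right, det2_rotCW_rotCW]; ring
  by_cases hD : det2 (s • rotCW α u) (t • rotCW β u) = 0
  · simp [hD]
  rw [hdet] at hD
  have hs : s ≠ 0 := left_ne_zero_of_mul (left_ne_zero_of_mul hD)
  have ht : t ≠ 0 := right_ne_zero_of_mul (left_ne_zero_of_mul hD)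
  have hαβ' : α < β := hαβ.lt_of_ne <| by
    rintro rfl
    simp at hD
  have det2_rotCW_self (γ : ℝ) : det2 (rotCW γ u) u = Real.sin γ * (u.1 ^ 2 + u.2 ^ 2) := by
    simpa [rotCW_zero] using det2_rotCW_rotCW γ 0 u
  have hsinαβ : Real.sin (α - β) < 0 := by
    rw [← neg_sub, Real.sin_neg, neg_lt_zero]
    exact Real.sin_pos_of_pos_of_lt_pi (by linarith) (by linarith)
  have hcone : inCone (s • rotCW α u) (t • rotCW β u) u ↔ 0 < s ∧ t < 0 := by
    refine inCone_smul_smul_iff ?_ ?_ ?_ hs ht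
    · rw [det2_rotCW_self]; exact mul_pos (Real.sin_pos_of_pos_of_lt_pi hα (by linarith)) hr
    · rw [det2_rotCW_self]; exact mul_pos (Real.sin_pos_of_pos_of_lt_pi (by linarith) hβ) hr
    · rw [det2_rotCW_rotCW]; exact mul_neg_of_neg_of_pos hsinαβ hr
  by_cases hst : 0 < s ∧ t < 0
  · rw [if_pos (hcone.2 hst), if_pos hst, abs_of_pos]
    rw [hdet]
    exact mul_pos_of_neg_of_neg (mul_neg_of_pos_of_neg hst.1 hst.2)
      (mul_neg_of_neg_of_pos hsinαβ hr)
  · rw [if_neg (mt hcone.1 hst), if_neg hst]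

section PairSums

variable {ι : Type*} [Fintype ι] (v : ι → ℝ × ℝ) (P Q : ι → Prop) [DecidablePred P]
  [DecidablePred Q]

lemma sum_ite_det2_eq_det2_sum_ite :
    (∑ p : ι × ι, if P p.1 ∧ Q p.2 then det2 (v p.1) (v p.2) else 0) =
      det2 (∑ i, if P i then v i else 0) (∑ j, if Q j then v j else 0) := by
  rw [Fintype.sum_prod_type, det2_sum_left]
  refine Finset.sum_congr rfl fun i _ => ?_
  rw [det2_sum_right]
  refine Finset.sum_congr rfl fun j _ => ?_
  by_cases hp : P i <;> by_cases hq : Q j <;> simp [hp, hq, det2]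

lemma sum_ite_det2_eq_zero_of_sum_eq_zero (hv : ∑ i, v i = 0) (hPQ : ∀ i, P i → ¬Q i)
    (hsupp : ∀ i, ¬P i → ¬Q i → v i = 0) :
    (∑ p : ι × ι, if P p.1 ∧ Q p.2 then det2 (v p.1) (v p.2) else 0) = 0 := by
  have hsplit : (∑ i, if P i then v i else 0) + (∑ i, if Q i then v i else 0) = 0 := by
    rw [← Finset.sum_add_distrib]
    refine (Finset.sum_congr rfl fun i _ => ?_).trans hv
    by_cases hp : P i
    · simp [hp, hPQ i hp]
    · by_cases hq : Q i
      · simp [hp, hq]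
      · simp [hp, hq, hsupp i hp hq]
  rw [sum_ite_det2_eq_det2_sum_ite, eq_neg_of_add_eq_zero_left hsplit]
  simp only [det2, Prod.fst_neg, Prod.snd_neg]
  ring

variable [LinearOrder ι]

lemma sum_ite_lt_det2_comm (hv : ∑ i, v i = 0) (hPQ : ∀ i, P i → ¬Q i)
    (hsupp : ∀ i, ¬P i → ¬Q i → v i = 0) :
    (∑ p : ι × ι, if p.1 < p.2 ∧ P p.1 ∧ Q p.2 then det2 (v p.1) (v p.2) else 0) =
      ∑ p : ι × ι, if p.1 < p.2 ∧ Q p.1 ∧ P p.2 then det2 (v p.1) (v p.2) else 0 := by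
  have hall := sum_ite_det2_eq_zero_of_sum_eq_zero v P Q hv hPQ hsupp
  have hsplit (p : ι × ι) : (if P p.1 ∧ Q p.2 then det2 (v p.1) (v p.2) else 0) =
      (if p.1 < p.2 ∧ P p.1 ∧ Q p.2 then det2 (v p.1) (v p.2) else 0) +
        (if p.2 < p.1 ∧ P p.1 ∧ Q p.2 then det2 (v p.1) (v p.2) else 0) := by
    rcases lt_trichotomy p.1 p.2 with h | h | h
    · simp [h, h.asymm]
    · simp [h, det2_self]
    · simp [h, h.asymm]
  have hflip : (∑ p : ι × ι, if p.2 < p.1 ∧ P p.1 ∧ Q p.2 then det2 (v p.1) (v p.2) else 0) =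
      -∑ p : ι × ι, if p.1 < p.2 ∧ Q p.1 ∧ P p.2 then det2 (v p.1) (v p.2) else 0 := by
    rw [← Finset.sum_neg_distrib]
    refine Fintype.sum_equiv (Equiv.prodComm ι ι) _ _ fun p => ?_
    by_cases h : p.2 < p.1 ∧ P p.1 ∧ Q p.2
    · simp [h, det2_swap (v p.1)]
    · have h' : ¬(p.2 < p.1 ∧ Q p.2 ∧ P p.1) := by tauto
      simp [h, h']
  simp only [hsplit, Finset.sum_add_distrib, hflip] at hall
  linarith

end PairSums

theorem det_sum_eq_cone_sum_general (N : ℕ) (b : Fin (N + 1) → ℤ × ℤ)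
    (hsum : ∑ i, b i = 0)
    (w wp : ℝ × ℝ) (hw : w ≠ 0) (hwp : wp ≠ 0) (horth : dot wp w = 0)
    (θ : Fin (N + 1) → ℝ) (hmono : Monotone θ)
    (hθ : ∀ i, 0 < θ i ∧ θ i < Real.pi)
    (hline : ∀ i, ∃ t : ℝ, toR (b i) = t • rotCW (θ i) wp) :
    (∑ p : Fin (N + 1) × Fin (N + 1),
      if p.1 < p.2 ∧ 0 < dot (toR (b p.1)) w ∧ dot (toR (b p.2)) w < 0
      then det2 (toR (b p.1)) (toR (b p.2)) else 0) =
    (∑ p : Fin (N + 1) × Fin (N + 1),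
      if p.1 < p.2 ∧ inCone (toR (b p.1)) (toR (b p.2)) wp
      then |det2 (toR (b p.1)) (toR (b p.2))| else 0) := by
  choose t ht using hline
  have hcone : (∑ p : Fin (N + 1) × Fin (N + 1),
      if p.1 < p.2 ∧ inCone (toR (b p.1)) (toR (b p.2)) wp
      then |det2 (toR (b p.1)) (toR (b p.2))| else 0) =
      ∑ p : Fin (N + 1) × Fin (N + 1),
        if p.1 < p.2 ∧ 0 < t p.1 ∧ t p.2 < 0 then det2 (toR (b p.1)) (toR (b p.2)) else 0 := by
    refine Fintype.sum_congr _ _ fun p => ?_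
    by_cases hp : p.1 < p.2
    · simp only [hp, true_and, ht]
      exact ite_inCone_abs_det2_rotCW hwp (hθ _).1 (hmono hp.le) (hθ _).2
    · simp [hp]
  rw [hcone]
  have hdot (i) : dot (toR (b i)) w = t i * (Real.sin (θ i) * det2 w wp) := by
    rw [ht, dot_smul_left, dot_rotCW, horth]; ring
  have hsin (i) : 0 < Real.sin (θ i) := Real.sin_pos_of_pos_of_lt_pi (hθ i).1 (hθ i).2
  rcases (det2_ne_zero_of_dot_eq_zero hwp hw horth).lt_or_gt with hneg | hpos
  · have hk (i) : Real.sin (θ i) * det2 w wp < 0 := mul_neg_of_pos_of_neg (hsin i) hneg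
    simp only [hdot, mul_pos_iff, mul_neg_iff, hk, (hk _).not_gt, and_true, and_false, or_false,
      false_or]
    refine sum_ite_lt_det2_comm _ _ _ (by rw [← toR_sum, hsum]; simp [toR])
      (fun i (h : t i < 0) => h.asymm) fun i h h' => ?_
    rw [ht, le_antisymm (not_lt.1 h') (not_lt.1 h), zero_smul]
  · have hk (i) : 0 < Real.sin (θ i) * det2 w wp := mul_pos (hsin i) hpos
    simp only [hdot, mul_pos_iff, mul_neg_iff, hk, (hk _).not_gt, and_true, and_false, or_false,
      false_or]

/-- If the lines `ℝ·w⊥, ℝ·b_1, …, ℝ·b_{N+1}` occur in weak clockwise cyclic order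
(with `ℝ·w⊥` distinct from the rest), then the sum of `det(b_i,b_j)` over pairs `i < j`
with `⟨b_i,w⟩ > 0 > ⟨b_j,w⟩` equals the sum of `|det(b_i,b_j)|` over pairs `i < j`
whose cone contains `w⊥`. -/
theorem det_sum_eq_cone_sum (N : ℕ) (b : Fin (N + 1) → ℤ × ℤ)
    (hsum : ∑ i, b i = 0)
    (hspan : Submodule.span ℝ (Set.range fun i => toR (b i)) = ⊤)
    (w wp : ℝ × ℝ) (hw : w ≠ 0) (hwp : wp ≠ 0) (horth : dot wp w = 0)
    (hwb : ∀ i, toR (b i) ≠ 0 → dot (toR (b i)) w ≠ 0)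
    (θ : Fin (N + 1) → ℝ) (hmono : Monotone θ)
    (hθ : ∀ i, 0 < θ i ∧ θ i < Real.pi)
    (hline : ∀ i, ∃ t : ℝ, toR (b i) = t • rotCW (θ i) wp) :
    (∑ p : Fin (N + 1) × Fin (N + 1),
      if p.1 < p.2 ∧ 0 < dot (toR (b p.1)) w ∧ dot (toR (b p.2)) w < 0
      then det2 (toR (b p.1)) (toR (b p.2)) else 0) =
    (∑ p : Fin (N + 1) × Fin (N + 1),
      if p.1 < p.2 ∧ inCone (toR (b p.1)) (toR (b p.2)) wp
      then |det2 (toR (b p.1)) (toR (b p.2))| else 0) :=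
  det_sum_eq_cone_sum_general N b hsum w wp hw hwp horth θ hmono hθ hline
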